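/- (Section 5.5, osp(2m|2)) Let λ ∈ 𝒫 and 1 ≤ k ≤ m with ⟨λ+ρ, δ+ε_k⟩ = 0 and λ_k ≠ 0, and suppose λ_m ≠ −λ_k. Let t be the largest index with k ≤ t ≤ m and |λ_t| = λ_k, and set φ(λ) = λ − (t−k+1)δ − Σ_{i=k}^{t} ε_i. Then φ(λ) ∈ 𝒫 and λ ∼ φ(λ). -/

import Mathlib

open Finset
open Fin.NatCast

/-- The standard basis vector `ε_i` of `ℚ^{1+m}` (with `ε_0 = δ`). -/
noncomputable def eps (m i : ℕ) : Fin (m+1) → ℚ := Pi.single (i : Fin (m+1)) 1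

/-- The bilinear form `⟨λ, μ⟩ = −λ₀μ₀ + Σ_{i=1}^m λ_i μ_i` on `ℚ^{1+m}`. -/
noncomputable def form (m : ℕ) (l μ : Fin (m+1) → ℚ) : ℚ :=
  -(l 0 * μ 0) + ∑ i : Fin (m+1), (if i = 0 then 0 else l i * μ i)

/-- `ρ` for `osp(2m|2)`: `ρ₀ = 1−m`, `ρ_i = m−i`. -/
noncomputable def rhoD (m : ℕ) : Fin (m+1) → ℚ :=
  fun i => if i = 0 then 1 - (m : ℚ) else (m : ℚ) - (i : ℕ)

/-- `ρ` for `osp(2m+1|2)`: `ρ₀ = 1/2−m`, `ρ_i = m−i+1/2`. -/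
noncomputable def rhoB (m : ℕ) : Fin (m+1) → ℚ :=
  fun i => if i = 0 then 1/2 - (m : ℚ) else (m : ℚ) - (i : ℕ) + 1/2

/-- All coordinates are integers. -/
def IsIntegralWt (m : ℕ) (l : Fin (m+1) → ℚ) : Prop := ∀ i, ∃ z : ℤ, l i = z

/-- Dominant integral weights for `osp(2m|2)`. -/
def PD (m : ℕ) (l : Fin (m+1) → ℚ) : Prop :=
  IsIntegralWt m l ∧ 0 ≤ l 0 ∧
  (∀ i j : ℕ, 1 ≤ i → i ≤ j → j ≤ m - 1 → l (j : Fin (m+1)) ≤ l (i : Fin (m+1))) ∧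
  |l (m : Fin (m+1))| ≤ l ((m - 1 : ℕ) : Fin (m+1)) ∧
  (∀ i : ℕ, 1 ≤ i → i ≤ m - 1 → 0 ≤ l (i : Fin (m+1))) ∧
  (∀ i : ℕ, 1 ≤ i → i ≤ m → l 0 < (i : ℚ) → l (i : Fin (m+1)) = 0)

/-- Dominant integral weights for `osp(2m+1|2)`. -/
def PB (m : ℕ) (l : Fin (m+1) → ℚ) : Prop :=
  IsIntegralWt m l ∧ 0 ≤ l 0 ∧
  (∀ i j : ℕ, 1 ≤ i → i ≤ j → j ≤ m → l (j : Fin (m+1)) ≤ l (i : Fin (m+1))) ∧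
  (∀ i : ℕ, 1 ≤ i → i ≤ m → 0 ≤ l (i : Fin (m+1))) ∧
  (∀ i : ℕ, 1 ≤ i → i ≤ m → l 0 < (i : ℚ) → l (i : Fin (m+1)) = 0)

/-- `λ` is atypical (w.r.t. a given `ρ`): `⟨λ+ρ, δ+s·ε_i⟩ = 0` for some `1 ≤ i ≤ m`, `s = ±1`. -/
def Atyp (m : ℕ) (ρ l : Fin (m+1) → ℚ) : Prop :=
  ∃ i : ℕ, 1 ≤ i ∧ i ≤ m ∧ ∃ s : ℚ, (s = 1 ∨ s = -1) ∧
    form m (l + ρ) (eps m 0 + s • eps m i) = 0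

abbrev GLQ (m : ℕ) := (Fin (m+1) → ℚ) ≃ₗ[ℚ] (Fin (m+1) → ℚ)

/-- Permutations of the coordinates `1, …, m` (fixing coordinate `0`). -/
def permSet (m : ℕ) : Set (GLQ m) :=
  {w | ∃ σ : Equiv.Perm (Fin (m+1)), σ 0 = 0 ∧ ∀ v, w v = v ∘ σ}

/-- The sign change of coordinate `0`. -/
def flip0Set (m : ℕ) : Set (GLQ m) :=
  {w | ∀ v k, w v k = if k = 0 then -(v k) else v k}

/-- Simultaneous sign changes of two coordinates among `1, …, m`. -/
def doubleFlipSet (m : ℕ) : Set (GLQ m) :=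
  {w | ∃ i j : Fin (m+1), i ≠ 0 ∧ j ≠ 0 ∧ i ≠ j ∧
    ∀ v k, w v k = if k = i ∨ k = j then -(v k) else v k}

/-- Sign changes of a single coordinate among `1, …, m`. -/
def singleFlipSet (m : ℕ) : Set (GLQ m) :=
  {w | ∃ i : Fin (m+1), i ≠ 0 ∧ ∀ v k, w v k = if k = i then -(v k) else v k}

/-- The Weyl group for `osp(2m|2)`. -/
def WD (m : ℕ) : Subgroup (GLQ m) :=
  Subgroup.closure (permSet m ∪ doubleFlipSet m ∪ flip0Set m)

/-- The Weyl group for `osp(2m+1|2)`. -/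
def WB (m : ℕ) : Subgroup (GLQ m) :=
  Subgroup.closure (permSet m ∪ singleFlipSet m ∪ flip0Set m)

/-- The block equivalence: the smallest equivalence relation with
`μ ∼ μ+α` for odd roots `α = ±(δ±ε_i)` with `⟨μ+ρ, α⟩ = 0`, and
`μ ∼ w(μ+ρ)−ρ` for `w ∈ W`. -/
def blockRel (m : ℕ) (ρ : Fin (m+1) → ℚ) (W : Subgroup (GLQ m)) :
    (Fin (m+1) → ℚ) → (Fin (m+1) → ℚ) → Prop :=
  Relation.EqvGen (fun μ ν =>
    (∃ i : ℕ, 1 ≤ i ∧ i ≤ m ∧ ∃ s t : ℚ, (s = 1 ∨ s = -1) ∧ (t = 1 ∨ t = -1) ∧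
      form m (μ + ρ) (t • (eps m 0 + s • eps m i)) = 0 ∧
      ν = μ + t • (eps m 0 + s • eps m i)) ∨
    (∃ w ∈ W, ν = w (μ + ρ) - ρ))

def blockD (m : ℕ) : (Fin (m+1) → ℚ) → (Fin (m+1) → ℚ) → Prop :=
  blockRel m (rhoD m) (WD m)

def blockB (m : ℕ) : (Fin (m+1) → ℚ) → (Fin (m+1) → ℚ) → Prop :=
  blockRel m (rhoB m) (WB m)

/-- The set `𝒫_λ = 𝒫_{λ+} ∪ 𝒫_{λ−}` for `osp(2m|2)`. -/
noncomputable def PlamD (m : ℕ) (l : Fin (m+1) → ℚ) : Set (Fin (m+1) → ℚ) :=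
  {μ | PD m μ ∧
    (μ = l + eps m 0 ∨ μ = l - eps m 0 ∨
     (∃ i : ℕ, 1 ≤ i ∧ i ≤ m - 1 ∧ (μ = l + eps m i ∨ μ = l - eps m i)) ∨
     (0 ≤ l (m : Fin (m+1)) ∧ μ = l + eps m m) ∨
     (l (m : Fin (m+1)) ≤ 0 ∧ μ = l - eps m m) ∨
     (l (m : Fin (m+1)) < 0 ∧ μ = l + eps m m) ∨
     (0 < l (m : Fin (m+1)) ∧ μ = l - eps m m))}

/-- The set `𝒫_λ = 𝒫_{λ+} ∪ 𝒫_{λ−}` for `osp(2m+1|2)`. -/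
noncomputable def PlamB (m : ℕ) (l : Fin (m+1) → ℚ) : Set (Fin (m+1) → ℚ) :=
  {μ | PB m μ ∧
    ((∃ i : ℕ, i ≤ m ∧ (μ = l + eps m i ∨ μ = l - eps m i)) ∨
     (l (m : Fin (m+1)) ≠ 0 ∧ μ = l))}

/-- The weight `λ^{j,q}`. -/
noncomputable def lamJQ (m : ℕ) (l : Fin (m+1) → ℚ) (l0 j : ℕ) (q : ℤ) : Fin (m+1) → ℚ :=
  ((j : ℚ) - (q : ℚ)) • eps m 0 + (∑ i ∈ Finset.Icc 1 j, l (i : Fin (m+1)) • eps m i) +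
    (q : ℚ) • eps m (j + 1) +
    ∑ i ∈ Finset.Icc (j+1) l0, (l (i : Fin (m+1)) + 1) • eps m (i+1)

/-- The weight `λ^{j,q}_−`. -/
noncomputable def lamJQm (m : ℕ) (l : Fin (m+1) → ℚ) (l0 j : ℕ) (q : ℤ) : Fin (m+1) → ℚ :=
  ((j : ℚ) - (q : ℚ)) • eps m 0 + (∑ i ∈ Finset.Icc 1 j, l (i : Fin (m+1)) • eps m i) +
    (q : ℚ) • eps m (j + 1) +
    (∑ i ∈ Finset.Icc (j+1) (l0 - 1), (l (i : Fin (m+1)) + 1) • eps m (i+1)) -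
    (l (l0 : Fin (m+1)) + 1) • eps m (l0 + 1)

/-- `λ^δ` for `osp(2m|2)`: coordinate `0` becomes `2m−2−λ₀`. -/
noncomputable def deltaD (m : ℕ) (l : Fin (m+1) → ℚ) : Fin (m+1) → ℚ :=
  fun i => if i = 0 then 2*(m : ℚ) - 2 - l 0 else l i

/-- `λ^δ` for `osp(2m+1|2)`: coordinate `0` becomes `2m−1−λ₀`. -/
noncomputable def deltaB (m : ℕ) (l : Fin (m+1) → ℚ) : Fin (m+1) → ℚ :=
  fun i => if i = 0 then 2*(m : ℚ) - 1 - l 0 else l i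

/-!
Subtracting the odd roots `δ+ε_k, δ+ε_{k+1}, …, δ+ε_t` one at a time is a chain of generating
moves of `∼`: because `λ_k = λ_{k+1} = … = λ_t`, each subtraction lowers the `δ`-coordinate by one
exactly when the next index comes into play, so `⟨·+ρ, δ+ε_i⟩` stays zero along the chain.
The result is dominant because `λ_k, …, λ_t` is a maximal run of coordinates equal to `λ_k ≥ 1`,
so lowering it by one keeps the coordinates decreasing, while atypicality,
`λ_k = λ₀ + 1 - 2m + k`, leaves `λ₀` enough room.
-/

section Coordinates

variable {m : ℕ}

lemma natCast_val_of_le {i : ℕ} (hi : i ≤ m) : ((i : Fin (m+1)) : ℕ) = i :=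
  Fin.val_cast_of_lt (Nat.lt_succ_of_le hi)

lemma natCast_ne_zero_of_le {i : ℕ} (hi1 : 1 ≤ i) (hi : i ≤ m) : (i : Fin (m+1)) ≠ 0 := by
  simp [Fin.ext_iff, natCast_val_of_le hi]; omega

lemma eps_apply_natCast {i j : ℕ} (hi : i ≤ m) (hj : j ≤ m) :
    eps m i (j : Fin (m+1)) = if j = i then 1 else 0 := by
  simp [eps, Pi.single_apply, Fin.ext_iff, natCast_val_of_le hi, natCast_val_of_le hj]

lemma eps_apply_zero {i : ℕ} (hi1 : 1 ≤ i) (hi : i ≤ m) : eps m i 0 = 0 := by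
  simpa [show (0 : ℕ) ≠ i by omega] using eps_apply_natCast (m := m) hi (Nat.zero_le m)

lemma form_add_right (μ v w : Fin (m+1) → ℚ) :
    form m μ (v + w) = form m μ v + form m μ w := by
  have hsplit : ∀ j : Fin (m+1), (if j = 0 then 0 else μ j * (v + w) j) =
      (if j = 0 then 0 else μ j * v j) + (if j = 0 then 0 else μ j * w j) := by
    intro j; split_ifs <;> simp [mul_add]
  rw [form, form, form, Finset.sum_congr rfl fun j _ => hsplit j, Finset.sum_add_distrib,
    Pi.add_apply]
  ring

lemma form_smul_right (μ v : Fin (m+1) → ℚ) (c : ℚ) :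
    form m μ (c • v) = c * form m μ v := by
  simp only [form, Pi.smul_apply, smul_eq_mul, mul_add, Finset.mul_sum]
  congr 1
  · ring
  · refine Finset.sum_congr rfl fun j _ => ?_
    split_ifs <;> ring

lemma form_eps_zero (μ : Fin (m+1) → ℚ) : form m μ (eps m 0) = -μ 0 := by
  simp +contextual [form, eps]

lemma form_eps {i : ℕ} (hi1 : 1 ≤ i) (hi : i ≤ m) (μ : Fin (m+1) → ℚ) :
    form m μ (eps m i) = μ i := by
  have hi0 := natCast_ne_zero_of_le hi1 hi
  have hterm : ∀ j : Fin (m+1), (if j = 0 then 0 else μ j * eps m i j) =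
      if j = (i : Fin (m+1)) then μ j else 0 := by
    intro j
    by_cases hj : j = (i : Fin (m+1)) <;> simp_all [eps]
  rw [form, Finset.sum_congr rfl fun j _ => hterm j, Finset.sum_ite_eq']
  simp [eps, hi0.symm]

lemma form_oddRoot {i : ℕ} (hi1 : 1 ≤ i) (hi : i ≤ m) (μ : Fin (m+1) → ℚ) :
    form m μ (eps m 0 + eps m i) = μ i - μ 0 := by
  rw [form_add_right, form_eps_zero, form_eps hi1 hi]; ring

lemma form_add_rhoD_oddRoot {i : ℕ} (hi1 : 1 ≤ i) (hi : i ≤ m) (μ : Fin (m+1) → ℚ) :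
    form m (μ + rhoD m) (eps m 0 + eps m i) = μ i - μ 0 + 2 * m - 1 - i := by
  simp only [form_oddRoot hi1 hi, Pi.add_apply, rhoD, if_neg (natCast_ne_zero_of_le hi1 hi),
    natCast_val_of_le hi, if_true]
  ring

end Coordinates

section OddReflections

variable {m : ℕ}

lemma blockD_sub_oddRoot {μ : Fin (m+1) → ℚ} {i : ℕ} (hi1 : 1 ≤ i) (hi : i ≤ m)
    (h : form m (μ + rhoD m) (eps m 0 + eps m i) = 0) :
    blockD m μ (μ - (eps m 0 + eps m i)) :=
  Relation.EqvGen.rel _ _ <| Or.inl ⟨i, hi1, hi, 1, -1, Or.inl rfl, Or.inr rfl,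
    by rw [one_smul, form_smul_right, h, mul_zero],
    by rw [one_smul, neg_one_smul, sub_eq_add_neg]⟩

noncomputable def subOddRoots (m : ℕ) (l : Fin (m+1) → ℚ) (k d : ℕ) : Fin (m+1) → ℚ :=
  l - ∑ i ∈ Ico k (k + d), (eps m 0 + eps m i)

variable {l : Fin (m+1) → ℚ} {k d : ℕ}

lemma subOddRoots_succ :
    subOddRoots m l k (d + 1) = subOddRoots m l k d - (eps m 0 + eps m (k + d)) := by
  rw [subOddRoots, subOddRoots, ← add_assoc, Finset.sum_Ico_succ_top (Nat.le_add_right k d),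
    sub_add_eq_sub_sub]

lemma subOddRoots_eq_sub_Icc {t : ℕ} (htk : k ≤ t) :
    subOddRoots m l k (t - k + 1) =
      l - ((t : ℚ) - (k : ℚ) + 1) • eps m 0 - ∑ i ∈ Icc k t, eps m i := by
  rw [subOddRoots, show k + (t - k + 1) = t + 1 by omega, Finset.Ico_add_one_right_eq_Icc,
    sum_add_distrib, sum_const, Nat.card_Icc, ← Nat.cast_smul_eq_nsmul ℚ, Nat.cast_sub (by omega)]
  push_cast
  module

lemma subOddRoots_apply_zero (hk : 1 ≤ k) (hkd : k + d ≤ m + 1) :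
    subOddRoots m l k d 0 = l 0 - d := by
  have hterm : ∀ i ∈ Ico k (k + d), (eps m 0 + eps m i) 0 = 1 := by
    intro i hi
    rw [Finset.mem_Ico] at hi
    rw [Pi.add_apply, eps_apply_zero (i := i) (by omega) (by omega)]
    simp [eps]
  rw [subOddRoots, Pi.sub_apply, Finset.sum_apply, Finset.sum_congr rfl hterm]
  simp

lemma subOddRoots_apply {j : ℕ} (hj1 : 1 ≤ j) (hj : j ≤ m) (hkd : k + d ≤ m + 1) :
    subOddRoots m l k d j = l j - if k ≤ j ∧ j < k + d then 1 else 0 := by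
  have hterm : ∀ i ∈ Ico k (k + d), (eps m 0 + eps m i) (j : Fin (m+1)) =
      if j = i then 1 else 0 := by
    intro i hi
    rw [Finset.mem_Ico] at hi
    simp [eps_apply_natCast (m := m) (Nat.zero_le m) hj,
      eps_apply_natCast (m := m) (i := i) (by omega) hj, show j ≠ 0 by omega]
  rw [subOddRoots, Pi.sub_apply, Finset.sum_apply, Finset.sum_congr rfl hterm, Finset.sum_ite_eq]
  simp only [Finset.mem_Ico]

lemma blockD_subOddRoots (hk : 1 ≤ k) (hkd : k + d ≤ m + 1)
    (hat : form m (l + rhoD m) (eps m 0 + eps m k) = 0)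
    (hconst : ∀ i : ℕ, k ≤ i → i < k + d → l i = l k) :
    blockD m l (subOddRoots m l k d) := by
  induction d with
  | zero =>
    rw [show subOddRoots m l k 0 = l by simp [subOddRoots]]
    exact Relation.EqvGen.refl l
  | succ d ih =>
    refine (ih (by omega) fun i hi hid => hconst i hi (by omega)).trans _ _ _ ?_
    rw [subOddRoots_succ]
    refine blockD_sub_oddRoot (by omega) (by omega) ?_
    rw [form_add_rhoD_oddRoot hk (by omega)] at hat
    rw [form_add_rhoD_oddRoot (by omega) (by omega),
      subOddRoots_apply (by omega) (by omega) (by omega), subOddRoots_apply_zero hk (by omega),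
      hconst (k + d) le_self_add (by omega), if_neg (by omega)]
    push_cast
    linarith

end OddReflections

lemma add_one_le_of_lt_of_intCast {x y : ℚ} (hx : ∃ a : ℤ, x = a) (hy : ∃ b : ℤ, y = b)
    (h : x < y) : x + 1 ≤ y := by
  obtain ⟨a, rfl⟩ := hx
  obtain ⟨b, rfl⟩ := hy
  exact_mod_cast Int.add_one_le_of_lt (by exact_mod_cast h)

namespace PD

variable {m : ℕ} {l : Fin (m+1) → ℚ}

lemma abs_le (hP : PD m l) {i j : ℕ} (hi1 : 1 ≤ i) (hij : i ≤ j) (hj : j ≤ m) (him : i < m) :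
    |l j| ≤ l i := by
  obtain ⟨-, -, hmono, habs, hnn, -⟩ := hP
  rcases hj.lt_or_eq with hjm | rfl
  · rw [abs_of_nonneg (hnn j (by omega) (by omega))]
    exact hmono i j hi1 hij (by omega)
  · exact habs.trans (hmono i (j - 1) hi1 (by omega) le_rfl)

lemma antitone (hP : PD m l) {i j : ℕ} (hi1 : 1 ≤ i) (hij : i ≤ j) (hj : j ≤ m) :
    l j ≤ l i := by
  rcases (hij.trans hj).lt_or_eq with him | him
  · exact (le_abs_self _).trans (hP.abs_le hi1 hij hj him)
  · obtain rfl : j = i := by omega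
    exact le_rfl

lemma apply_eq_of_abs_eq {k t i : ℕ} (hP : PD m l) (hk1 : 1 ≤ k) (htm : t ≤ m)
    (ht : |l t| = l k) (hlm : l m ≠ -l k) (hki : k ≤ i) (hit : i ≤ t) : l i = l k := by
  rcases (hit.trans htm).lt_or_eq with him | him
  · exact le_antisymm (hP.antitone hk1 hki him.le) (ht ▸ hP.abs_le (by omega) hit htm him)
  · obtain rfl : t = i := by omega
    rcases eq_or_eq_neg_of_abs_eq ht with h | h
    · exact h
    · exact absurd (him ▸ h) hlm

lemma abs_add_one_le {k j : ℕ} (hP : PD m l) (hk1 : 1 ≤ k) (hkj : k < j) (hjm : j ≤ m)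
    (hne : |l j| ≠ l k) : |l j| + 1 ≤ l k := by
  obtain ⟨z, hz⟩ := hP.1 j
  exact add_one_le_of_lt_of_intCast ⟨|z|, by rw [hz, Int.cast_abs]⟩ (hP.1 k)
    ((hP.abs_le hk1 hkj.le hjm (by omega)).lt_of_ne hne)

end PD

section Dominance

variable {m : ℕ} {l : Fin (m+1) → ℚ} {k d : ℕ}

lemma isIntegralWt_subOddRoots (h : IsIntegralWt m l) (k d : ℕ) :
    IsIntegralWt m (subOddRoots m l k d) := by
  intro j
  obtain ⟨z, hz⟩ := h j
  refine ⟨z - ∑ i ∈ Ico k (k + d),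
    ((if j = 0 then 1 else 0) + if j = (i : Fin (m+1)) then 1 else 0), ?_⟩
  simp [subOddRoots, eps, Pi.single_apply, hz]

lemma subOddRoots_antitone (hP : PD m l) (hkd : k + d ≤ m + 1)
    (hconst : ∀ i : ℕ, k ≤ i → i < k + d → l i = l k)
    (hdrop : ∀ j : ℕ, k + d ≤ j → j ≤ m → |l j| + 1 ≤ l k)
    {i j : ℕ} (hi1 : 1 ≤ i) (hij : i ≤ j) (hj : j ≤ m) :
    subOddRoots m l k d j ≤ subOddRoots m l k d i := by
  have hlij := hP.antitone hi1 hij hj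
  rw [subOddRoots_apply (by omega) hj hkd, subOddRoots_apply hi1 (by omega) hkd]
  split_ifs with hjb hib hib
  · linarith
  · linarith
  · linarith [le_abs_self (l j), hdrop j (by omega) hj, hconst i hib.1 hib.2]
  · linarith

lemma subOddRoots_nonneg (hP : PD m l) (hkd : k + d ≤ m + 1) (hc : 1 ≤ l k)
    (hconst : ∀ i : ℕ, k ≤ i → i < k + d → l i = l k) {i : ℕ} (hi1 : 1 ≤ i) (him : i ≤ m - 1) :
    0 ≤ subOddRoots m l k d i := by
  obtain ⟨-, -, -, -, hnn, -⟩ := hP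
  rw [subOddRoots_apply hi1 (by omega) hkd]
  split_ifs with hib
  · linarith [hconst i hib.1 hib.2]
  · linarith [hnn i hi1 him]

lemma subOddRoots_abs_le (hm : 2 ≤ m) (hP : PD m l) (hkd : k + d ≤ m + 1) (hc : 1 ≤ l k)
    (hconst : ∀ i : ℕ, k ≤ i → i < k + d → l i = l k)
    (hdrop : ∀ j : ℕ, k + d ≤ j → j ≤ m → |l j| + 1 ≤ l k) :
    |subOddRoots m l k d m| ≤ subOddRoots m l k d (m - 1 : ℕ) := by
  have hanti := subOddRoots_antitone hP hkd hconst hdrop (i := m - 1) (j := m)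
    (by omega) (by omega) le_rfl
  by_cases hmb : k ≤ m ∧ m < k + d
  · have hφm : subOddRoots m l k d m = l k - 1 := by
      rw [subOddRoots_apply (by omega) le_rfl hkd, if_pos hmb, hconst m hmb.1 hmb.2]
    rw [abs_of_nonneg (by rw [hφm]; linarith)]
    exact hanti
  · rw [subOddRoots_apply (by omega) le_rfl hkd, subOddRoots_apply (by omega) (by omega) hkd,
      if_neg hmb, sub_zero]
    split_ifs with hmb'
    · linarith [hdrop m (by omega) le_rfl, hconst (m - 1) hmb'.1 hmb'.2]
    · obtain ⟨-, -, -, habs, -, -⟩ := hP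
      simpa using habs

lemma pd_subOddRoots (hm : 2 ≤ m) (hP : PD m l)
    (hk1 : 1 ≤ k) (hkm : k ≤ m) (hkd : k + d ≤ m + 1) (hc : 1 ≤ l k)
    (hat : form m (l + rhoD m) (eps m 0 + eps m k) = 0)
    (hconst : ∀ i : ℕ, k ≤ i → i < k + d → l i = l k)
    (hdrop : ∀ j : ℕ, k + d ≤ j → j ≤ m → |l j| + 1 ≤ l k) :
    PD m (subOddRoots m l k d) := by
  rw [form_add_rhoD_oddRoot hk1 hkm] at hat
  have hkdq : (k : ℚ) + d ≤ m + 1 := by exact_mod_cast hkd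
  refine ⟨isIntegralWt_subOddRoots hP.1 k d, ?_,
    fun i j hi1 hij hj => subOddRoots_antitone hP hkd hconst hdrop hi1 hij (by omega),
    subOddRoots_abs_le hm hP hkd hc hconst hdrop,
    fun i hi1 him => subOddRoots_nonneg hP hkd hc hconst hi1 him, fun i hi1 him hlt => ?_⟩
  · have hmq : (2 : ℚ) ≤ m := by exact_mod_cast hm
    rw [subOddRoots_apply_zero hk1 hkd]
    linarith
  · -- Only the last coordinate can lie beyond `φ(λ)₀`, and then it is `λ_k - 1 = 0`.
    rw [subOddRoots_apply_zero hk1 hkd] at hlt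
    have hiq : (i : ℚ) ≤ m := by exact_mod_cast him
    have hlast : 2 * m < i + (k + d) := by
      have : (2 * m : ℚ) < i + (k + d) := by linarith
      exact_mod_cast this
    have hck : l k = 1 := by
      have := add_one_le_of_lt_of_intCast (y := 2) (hP.1 k) ⟨2, by norm_num⟩ (by linarith)
      linarith
    have him' : i = m := by omega
    rw [subOddRoots_apply hi1 him hkd, if_pos (by omega), him', hconst m (by omega) (by omega), hck]
    norm_num

end Dominance

/-- Section 5.5 for `osp(2m|2)`: if `λ ∈ 𝒫` is `(δ+ε_k)`-atypical with `λ_k ≠ 0`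
and `λ_m ≠ −λ_k`, and `t` is the largest index with `k ≤ t ≤ m` and `|λ_t| = λ_k`,
then `φ(λ) = λ − (t−k+1)δ − Σ_{i=k}^t ε_i ∈ 𝒫` and `λ ∼ φ(λ)`. -/
theorem phi_dominant_equiv_D (m : ℕ) (hm : 2 ≤ m) (l : Fin (m+1) → ℚ) (hP : PD m l)
    (k : ℕ) (hk1 : 1 ≤ k) (hkm : k ≤ m)
    (hat : form m (l + rhoD m) (eps m 0 + eps m k) = 0)
    (hlk : l (k : Fin (m+1)) ≠ 0)
    (hlm : l (m : Fin (m+1)) ≠ - l (k : Fin (m+1)))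
    (t : ℕ) (htk : k ≤ t) (htm : t ≤ m)
    (ht : |l (t : Fin (m+1))| = l (k : Fin (m+1)))
    (htmax : ∀ u : ℕ, t < u → u ≤ m → |l (u : Fin (m+1))| ≠ l (k : Fin (m+1))) :
    PD m (l - ((t : ℚ) - (k : ℚ) + 1) • eps m 0 - ∑ i ∈ Finset.Icc k t, eps m i) ∧
    blockD m l (l - ((t : ℚ) - (k : ℚ) + 1) • eps m 0 - ∑ i ∈ Finset.Icc k t, eps m i) := by
  have hconst : ∀ i : ℕ, k ≤ i → i < k + (t - k + 1) → l i = l k :=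
    fun i hki hit => hP.apply_eq_of_abs_eq hk1 htm ht hlm hki (by omega)
  have hdrop : ∀ j : ℕ, k + (t - k + 1) ≤ j → j ≤ m → |l j| + 1 ≤ l k :=
    fun j htj hjm => hP.abs_add_one_le hk1 (by omega) hjm (htmax j (by omega) hjm)
  have hc : 1 ≤ l k := by
    simpa using add_one_le_of_lt_of_intCast ⟨0, by simp⟩ (hP.1 k)
      ((ht ▸ abs_nonneg _ : (0 : ℚ) ≤ l k).lt_of_ne' hlk)
  rw [← subOddRoots_eq_sub_Icc htk]
  exact ⟨pd_subOddRoots hm hP hk1 hkm (by omega) hc hat hconst hdrop,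
    blockD_subOddRoots hk1 (by omega) hat hconst⟩
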